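/- The linear involution I_ψ : ℝ⁶ → ℝ⁶ induced by the coordinate permutation ψ = (x₁₂ x₁₃)(x₃₁ x₂₁)(x₃₂ x₂₃) (which swaps the coordinates x₁₂ ↔ x₁₃, x₃₁ ↔ x₂₁, and x₃₂ ↔ x₂₃) is an orthogonal transformation that maps the polytope P onto itself and maps P₁ = conv({O} ∪ (P ∩ α₁)) onto itself. -/

import Mathlib

open MeasureTheory

/-- The polytope `P ⊂ ℝ⁶` in coordinates `(x₁₂, x₂₃, x₃₁, x₁₃, x₃₂, x₂₁)`,
indexed as `(x 0, x 1, x 2, x 3, x 4, x 5)`. -/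
def polyP : Set (EuclideanSpace ℝ (Fin 6)) :=
  {x | x 0 + x 3 + 2 * (x 5 + x 2) ≤ 1 ∧
       x 5 + x 1 + 2 * (x 0 + x 4) ≤ 1 ∧
       x 2 + x 4 + 2 * (x 3 + x 1) ≤ 1 ∧
       ∀ i, 0 ≤ x i}

/-- The hyperplane `α₁ : x₁₂+x₁₃+2(x₂₁+x₃₁) = 1`. -/
def alpha1 : Set (EuclideanSpace ℝ (Fin 6)) :=
  {x | x 0 + x 3 + 2 * (x 5 + x 2) = 1}

/-- `P₁ = conv({O} ∪ (P ∩ α₁))`. -/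
noncomputable def P1 : Set (EuclideanSpace ℝ (Fin 6)) :=
  convexHull ℝ ({0} ∪ (polyP ∩ alpha1))

/-- The map `I_ψ` induced by the coordinate permutation
`ψ = (x₁₂ x₁₃)(x₃₁ x₂₁)(x₃₂ x₂₃)`, swapping `x₁₂ ↔ x₁₃`, `x₃₁ ↔ x₂₁`,
`x₃₂ ↔ x₂₃`. -/
def Ipsi (x : EuclideanSpace ℝ (Fin 6)) : EuclideanSpace ℝ (Fin 6) :=
  WithLp.toLp 2 ![x 3, x 4, x 5, x 0, x 1, x 2]

/-! `I_ψ` permutes the coordinates by the involution `i ↦ i + 3` of `Fin 6`, so it is a linear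
isometry and an involution. It fixes the first defining inequality of `P` and the hyperplane `α₁`,
and exchanges the other two inequalities, so it maps `P`, `P ∩ α₁` and `{O}` into themselves, hence
`P₁` as well, because linear maps commute with convex hulls. An involution mapping a set into
itself maps it onto itself. -/

open Set

theorem Function.Involutive.image_eq_of_mapsTo {α : Type*} {f : α → α} {s : Set α}
    (hf : f.Involutive) (h : MapsTo f s s) : f '' s = s :=
  h.image_subset.antisymm fun x hx => ⟨f x, h hx, hf x⟩

theorem IsLinearMap.mapsTo_convexHull {𝕜 E F : Type*} [Semiring 𝕜] [PartialOrder 𝕜]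
    [AddCommMonoid E] [AddCommMonoid F] [Module 𝕜 E] [Module 𝕜 F]
    {f : E → F} (hf : IsLinearMap 𝕜 f) {s : Set E} {t : Set F} (h : MapsTo f s t) :
    MapsTo f (convexHull 𝕜 s) (convexHull 𝕜 t) := by
  rw [mapsTo_iff_image_subset, hf.image_convexHull]
  exact convexHull_mono h.image_subset

theorem Ipsi_apply (x : EuclideanSpace ℝ (Fin 6)) (i : Fin 6) : Ipsi x i = x (i + 3) := by
  fin_cases i <;> rfl

theorem Ipsi_involutive : Function.Involutive Ipsi := by
  intro x
  ext i
  fin_cases i <;> rfl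

-- `piLpCongrLeft e` reindexes by `e.symm`, and `(Equiv.subRight 3).symm = (· + 3)`.
noncomputable def ipsiIsometry : EuclideanSpace ℝ (Fin 6) ≃ₗᵢ[ℝ] EuclideanSpace ℝ (Fin 6) :=
  LinearIsometryEquiv.piLpCongrLeft 2 ℝ ℝ (Equiv.subRight 3)

theorem coe_ipsiIsometry : ⇑ipsiIsometry = Ipsi := by
  funext x
  ext i
  simp [ipsiIsometry, Ipsi_apply, Equiv.piCongrLeft']

theorem isLinearMap_Ipsi : IsLinearMap ℝ Ipsi :=
  coe_ipsiIsometry ▸ ipsiIsometry.toLinearMap.isLinear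

theorem mapsTo_Ipsi_polyP : MapsTo Ipsi polyP polyP := by
  rintro x ⟨h₁, h₂, h₃, hnonneg⟩
  simp only [polyP, mem_ofPred_eq, Ipsi_apply, Fin.reduceAdd]
  exact ⟨by linarith, by linarith, by linarith, fun i => hnonneg _⟩

theorem mapsTo_Ipsi_alpha1 : MapsTo Ipsi alpha1 alpha1 := by
  intro x (hx : x 0 + x 3 + 2 * (x 5 + x 2) = 1)
  simp only [alpha1, mem_ofPred_eq, Ipsi_apply, Fin.reduceAdd]
  linarith

/-- `I_ψ` is an orthogonal (linear, norm-preserving) involution mapping `P`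
onto itself and `P₁` onto itself. -/
theorem Ipsi_orthogonal_involution_preserves :
    IsLinearMap ℝ Ipsi ∧
    (∀ x, ‖Ipsi x‖ = ‖x‖) ∧
    Ipsi ∘ Ipsi = id ∧
    Ipsi '' polyP = polyP ∧
    Ipsi '' P1 = P1 := by
  refine ⟨isLinearMap_Ipsi, fun x => coe_ipsiIsometry ▸ ipsiIsometry.norm_map x,
    Ipsi_involutive.comp_self, Ipsi_involutive.image_eq_of_mapsTo mapsTo_Ipsi_polyP,
    Ipsi_involutive.image_eq_of_mapsTo ?_⟩
  have mapsTo_zero : MapsTo Ipsi {0} {0} := mapsTo_singleton.2 isLinearMap_Ipsi.map_zero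
  exact isLinearMap_Ipsi.mapsTo_convexHull
    (mapsTo_zero.union_union (mapsTo_Ipsi_polyP.inter_inter mapsTo_Ipsi_alpha1))
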